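/- For all natural numbers i and real k, b_{i+1,i,k} = (i+1)! · (i + 2k)/2. -/
import Mathlib


open Finset

noncomputable def msn (i j : ℕ) (k : ℝ) : ℝ :=
  ∑ r ∈ Finset.range (j + 1), (j.choose r : ℝ) * (-1 : ℝ) ^ (j - r) * ((r : ℝ) + k) ^ i

lemma msn_rec (m j : ℕ) (k : ℝ) :
    msn (m + 1) (j + 1) k = ((j : ℝ) + 1) * msn m j (k + 1) + k * msn m (j + 1) k := by
  unfold msn
  have h1 : ∀ r ∈ Finset.range (j + 1 + 1),
      ((j + 1).choose r : ℝ) * (-1 : ℝ) ^ (j + 1 - r) * ((r : ℝ) + k) ^ (m + 1)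
      = ((j + 1).choose r : ℝ) * (-1 : ℝ) ^ (j + 1 - r) * (r : ℝ) * ((r : ℝ) + k) ^ m
        + k * (((j + 1).choose r : ℝ) * (-1 : ℝ) ^ (j + 1 - r) * ((r : ℝ) + k) ^ m) := by
    intro r _; ring
  rw [Finset.sum_congr rfl h1, Finset.sum_add_distrib, ← Finset.mul_sum]
  congr 1
  rw [Finset.sum_range_succ'
    (f := fun r => ((j + 1).choose r : ℝ) * (-1 : ℝ) ^ (j + 1 - r) * (r : ℝ) * ((r : ℝ) + k) ^ m)]
  simp only [Nat.cast_zero, mul_zero, zero_mul, add_zero]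
  rw [Finset.mul_sum]
  apply Finset.sum_congr rfl
  intro s hs
  have hc : ((j + 1).choose (s + 1) : ℝ) * ((s : ℝ) + 1) = ((j : ℝ) + 1) * (j.choose s : ℝ) := by
    exact_mod_cast (Nat.add_one_mul_choose_eq j s).symm
  push_cast
  rw [show ((s : ℝ) + (k + 1)) = (s : ℝ) + 1 + k by ring]
  linear_combination ((-1 : ℝ) ^ (j - s) * ((s : ℝ) + 1 + k) ^ m) * hc

lemma msn_zero_succ (j : ℕ) (k : ℝ) : msn 0 (j + 1) k = 0 := by
  unfold msn
  simp only [pow_zero, mul_one]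
  have h1 : ∀ r ∈ Finset.range (j + 1 + 1),
      ((j + 1).choose r : ℝ) * (-1 : ℝ) ^ (j + 1 - r)
      = (-1 : ℝ) ^ (j + 1) * ((-1 : ℝ) ^ r * ((j + 1).choose r : ℝ)) := by
    intro r hr
    have hr' : r ≤ j + 1 := Nat.lt_succ_iff.mp (Finset.mem_range.mp hr)
    have h2 : ((-1 : ℝ)) ^ (j + 1 - r) * (-1 : ℝ) ^ r = (-1 : ℝ) ^ (j + 1) := by
      rw [← pow_add, Nat.sub_add_cancel hr']
    have h3 : ((-1 : ℝ)) ^ r * (-1 : ℝ) ^ r = 1 := by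
      rw [← pow_add, ← two_mul, pow_mul]; norm_num
    linear_combination (((j + 1).choose r : ℝ) * (-1 : ℝ) ^ r) * h2
      - (((j + 1).choose r : ℝ) * (-1 : ℝ) ^ (j + 1 - r)) * h3
  rw [Finset.sum_congr rfl h1, ← Finset.mul_sum]
  have h4 : ∑ r ∈ Finset.range (j + 1 + 1), ((-1 : ℝ) ^ r * ((j + 1).choose r : ℝ)) = 0 := by
    have := Int.alternating_sum_range_choose (n := j + 1)
    simp only [Nat.succ_ne_zero, if_false, Nat.add_eq_zero, one_ne_zero, and_false] at this
    exact_mod_cast congrArg (Int.cast : ℤ → ℝ) this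
  rw [h4, mul_zero]

lemma msn_lt (m : ℕ) : ∀ j : ℕ, ∀ k : ℝ, m < j → msn m j k = 0 := by
  induction m with
  | zero =>
    intro j k hj
    obtain ⟨j', rfl⟩ := Nat.exists_eq_add_of_lt hj
    rw [zero_add]
    exact msn_zero_succ j' k
  | succ m ih =>
    intro j k hj
    obtain ⟨j', rfl⟩ : ∃ j', j = j' + 1 := ⟨j - 1, by omega⟩
    rw [msn_rec, ih j' (k + 1) (by omega), ih (j' + 1) k (by omega)]
    ring

lemma msn_diag (j : ℕ) : ∀ k : ℝ, msn j j k = (j.factorial : ℝ) := by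
  induction j with
  | zero => intro k; simp [msn]
  | succ j ih =>
    intro k
    rw [msn_rec, ih (k + 1), msn_lt j (j + 1) k (by omega)]
    rw [Nat.factorial_succ]
    push_cast
    ring

theorem stmt (i : ℕ) (k : ℝ) : msn (i + 1) i k = ((i + 1).factorial : ℝ) * (((i : ℝ) + 2 * k) / 2) := by
  induction i generalizing k with
  | zero => simp [msn]
  | succ i ih =>
    rw [msn_rec, ih (k + 1), msn_diag (i + 1) k]
    rw [show (i + 1 + 1).factorial = (i + 2) * (i + 1).factorial from rfl]
    push_cast
    ring
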